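/- Suppose that λ ≥ ℵ₂ is a regular cardinal and S ⊆ λ is stationary. Then the following are equivalent: (1) uDSR(<λ, S); (2) DSR(<λ, S); (3) OSR(S); (4) for every matrix ⟨S_{α,i} : α < λ, i < j_α⟩ of stationary subsets of S, where j_α < λ for all α < λ, there is an ordinal γ < λ of uncountable cofinality such that S_{α,i} ∩ γ is stationary in γ for all α < γ and all i < j_α. (Consequently sDSR(<λ, S), which lies between (1) and (2), is also equivalent to these.) -/

import Mathlib

/-!
Clubs at points of uncountable cofinality are stationary and stationary sets are unbounded, so
DSR ⇒ sDSR ⇒ uDSR; uDSR ⇒ OSR via the matrix whose row `α` lists the first `α` sets; and (4) ⇒ DSR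
with the club `F = γ`. The work is in OSR ⇒ (4): a pairing `λ ≅ λ × λ` enumerates the matrix
entries as a `λ`-sequence, which, intersected with the club of closure points of the enumeration,
reflects at some `δ`. That `δ` is then itself a closure point, so every entry `S_{α,i}` with
`α < δ` is listed below `δ` and reflects at `δ`.
-/

/-- `α` is a limit point of the set of ordinals `C`:
`α > 0` and `C ∩ α` is unbounded in `α`. -/
def IsLimitPointOf (C : Set Ordinal.{0}) (α : Ordinal.{0}) : Prop :=
  0 < α ∧ ∀ β < α, ∃ γ ∈ C, β < γ ∧ γ < α

/-- `C` is a club (closed and unbounded) subset of the ordinal `δ`. -/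
def IsClubIn (C : Set Ordinal.{0}) (δ : Ordinal.{0}) : Prop :=
  C ⊆ Set.Iio δ ∧ (∀ β < δ, ∃ γ ∈ C, β < γ) ∧ ∀ α < δ, IsLimitPointOf C α → α ∈ C

/-- `S` is stationary in `δ`: `S` meets every club subset of `δ`. -/
def IsStationaryIn (S : Set Ordinal.{0}) (δ : Ordinal.{0}) : Prop :=
  ∀ C, IsClubIn C δ → (S ∩ C).Nonempty

/-- `DSR(<κ, S)` for `S ⊆ λ`: for every matrix `⟨S (α,i) : α < λ, i < j α⟩` of stationary
subsets of `S` with `j α` of cardinality `< κ`, there are `γ < λ` of uncountable cofinality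
and a club `F ⊆ γ` such that `S (α,i) ∩ γ` is stationary in `γ` for all `α ∈ F`, `i < j α`. -/
def DSR (kappa lam : Cardinal.{0}) (S : Set Ordinal.{0}) : Prop :=
  ∀ (j : Ordinal.{0} → Ordinal.{0}) (T : Ordinal.{0} → Ordinal.{0} → Set Ordinal.{0}),
    (∀ α < lam.ord, (j α).card < kappa) →
    (∀ α < lam.ord, ∀ i < j α, T α i ⊆ S ∧ IsStationaryIn (T α i) lam.ord) →
    ∃ γ < lam.ord, Cardinal.aleph0 < γ.cof ∧
      ∃ F, IsClubIn F γ ∧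
        ∀ α ∈ F, ∀ i < j α, IsStationaryIn (T α i ∩ Set.Iio γ) γ

/-- `sDSR(<κ, S)`: as `DSR(<κ, S)`, but the set `F ⊆ γ` is only required
to be stationary in `γ`. -/
def sDSR (kappa lam : Cardinal.{0}) (S : Set Ordinal.{0}) : Prop :=
  ∀ (j : Ordinal.{0} → Ordinal.{0}) (T : Ordinal.{0} → Ordinal.{0} → Set Ordinal.{0}),
    (∀ α < lam.ord, (j α).card < kappa) →
    (∀ α < lam.ord, ∀ i < j α, T α i ⊆ S ∧ IsStationaryIn (T α i) lam.ord) →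
    ∃ γ < lam.ord, Cardinal.aleph0 < γ.cof ∧
      ∃ F, F ⊆ Set.Iio γ ∧ IsStationaryIn F γ ∧
        ∀ α ∈ F, ∀ i < j α, IsStationaryIn (T α i ∩ Set.Iio γ) γ

/-- `uDSR(<κ, S)`: as `DSR(<κ, S)`, but the set `F ⊆ γ` is only required
to be unbounded in `γ`. -/
def uDSR (kappa lam : Cardinal.{0}) (S : Set Ordinal.{0}) : Prop :=
  ∀ (j : Ordinal.{0} → Ordinal.{0}) (T : Ordinal.{0} → Ordinal.{0} → Set Ordinal.{0}),
    (∀ α < lam.ord, (j α).card < kappa) →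
    (∀ α < lam.ord, ∀ i < j α, T α i ⊆ S ∧ IsStationaryIn (T α i) lam.ord) →
    ∃ γ < lam.ord, Cardinal.aleph0 < γ.cof ∧
      ∃ F, F ⊆ Set.Iio γ ∧ (∀ β < γ, ∃ α ∈ F, β < α) ∧
        ∀ α ∈ F, ∀ i < j α, IsStationaryIn (T α i ∩ Set.Iio γ) γ

/-- `OSR(S)`: for every `λ`-sequence of stationary subsets of `S` there is a `δ < λ` of
uncountable cofinality at which all `S α` with `α < δ` reflect. -/
def OSR (lam : Cardinal.{0}) (S : Set Ordinal.{0}) : Prop :=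
  ∀ T : Ordinal.{0} → Set Ordinal.{0},
    (∀ α < lam.ord, T α ⊆ S ∧ IsStationaryIn (T α) lam.ord) →
    ∃ δ < lam.ord, Cardinal.aleph0 < δ.cof ∧
      ∀ α < δ, IsStationaryIn (T α ∩ Set.Iio δ) δ

open Cardinal Order Set

section Clubs

variable {C D A : Set Ordinal.{0}} {α β δ : Ordinal.{0}}

theorem isSuccLimit_of_aleph0_lt_cof (hδ : ℵ₀ < δ.cof) : IsSuccLimit δ :=
  Ordinal.one_lt_cof_iff.mp (one_lt_aleph0.trans hδ)

theorem IsLimitPointOf.mono (hCD : C ⊆ D) (h : IsLimitPointOf C α) : IsLimitPointOf D α :=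
  ⟨h.1, fun β hβ => (h.2 β hβ).imp fun _ hγ => ⟨hCD hγ.1, hγ.2⟩⟩

theorem isClubIn_Ioo (hδ : IsSuccLimit δ) (hβ : β < δ) : IsClubIn (Ioo β δ) δ := by
  refine ⟨fun _ hx => hx.2, fun x hx => ⟨succ (max β x), ⟨?_, ?_⟩, ?_⟩, fun α hα hlim => ?_⟩
  · exact (le_max_left β x).trans_lt (lt_succ _)
  · exact hδ.succ_lt (max_lt hβ hx)
  · exact (le_max_right β x).trans_lt (lt_succ _)
  · obtain ⟨γ, hγ, -, hγα⟩ := hlim.2 0 hlim.1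
    exact ⟨hγ.1.trans hγα, hα⟩

theorem IsClubIn.inter (hδ : ℵ₀ < δ.cof) (hC : IsClubIn C δ) (hD : IsClubIn D δ) :
    IsClubIn (C ∩ D) δ := by
  refine ⟨fun _ hx => hC.1 hx.1, fun x hx => ?_, fun α hα hlim =>
    ⟨hC.2.2 α hα (hlim.mono inter_subset_left), hD.2.2 α hα (hlim.mono inter_subset_right)⟩⟩
  have hnext : ∀ y < δ, ∃ z < δ, ∃ c ∈ C, ∃ d ∈ D, y < c ∧ c < d ∧ d < z := by
    intro y hy
    obtain ⟨c, hc, hyc⟩ := hC.2.1 y hy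
    obtain ⟨d, hd, hcd⟩ := hD.2.1 c (hC.1 hc)
    exact ⟨succ d, (isSuccLimit_of_aleph0_lt_cof hδ).succ_lt (hD.1 hd), c, hc, d, hd, hyc, hcd,
      lt_succ d⟩
  choose! next hnext_lt c hc d hd hyc hcd hdz using hnext
  have hiter : ∀ n, next^[n] x < δ := fun n => by
    induction n with
    | zero => exact hx
    | succ n ih => rw [Function.iterate_succ_apply']; exact hnext_lt _ ih
  have hle : ∀ n, next (next^[n] x) ≤ Ordinal.nfp next x := fun n => by
    rw [← Function.iterate_succ_apply' next n x]
    exact Ordinal.iterate_le_nfp next x (n + 1)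
  have hx_lt : x < Ordinal.nfp next x :=
    ((hyc x hx).trans ((hcd x hx).trans (hdz x hx))).trans_le (hle 0)
  -- the supremum of the iterates is a limit of points of `C` and of points of `D`
  have hlimit : ∀ E : Set Ordinal, (∀ y < δ, ∃ e ∈ E, y < e ∧ e < next y) →
      IsLimitPointOf E (Ordinal.nfp next x) := fun E hE => by
    refine ⟨pos_of_gt hx_lt, fun b hb => ?_⟩
    obtain ⟨n, hn⟩ := Ordinal.lt_nfp_iff.mp hb
    obtain ⟨e, he, hne, hen⟩ := hE _ (hiter n)
    exact ⟨e, he, hn.trans hne, hen.trans_le (hle n)⟩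
  have hσ : Ordinal.nfp next x < δ := Ordinal.nfp_lt_ord hδ hnext_lt hx
  refine ⟨Ordinal.nfp next x, ⟨hC.2.2 _ hσ (hlimit C ?_), hD.2.2 _ hσ (hlimit D ?_)⟩, hx_lt⟩
  · exact fun y hy => ⟨c y, hc y hy, hyc y hy, (hcd y hy).trans (hdz y hy)⟩
  · exact fun y hy => ⟨d y, hd y hy, (hyc y hy).trans (hcd y hy), hdz y hy⟩

theorem IsStationaryIn.mono (hA : IsStationaryIn A δ) (hAC : A ⊆ C) : IsStationaryIn C δ :=
  fun D hD => (hA D hD).mono (inter_subset_inter_left D hAC)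

theorem IsStationaryIn.inter_isClubIn (hδ : ℵ₀ < δ.cof) (hA : IsStationaryIn A δ)
    (hC : IsClubIn C δ) : IsStationaryIn (A ∩ C) δ := fun D hD => by
  obtain ⟨x, hxA, hxC, hxD⟩ := hA _ (hC.inter hδ hD)
  exact ⟨x, ⟨hxA, hxC⟩, hxD⟩

theorem IsClubIn.isStationaryIn (hδ : ℵ₀ < δ.cof) (hC : IsClubIn C δ) : IsStationaryIn C δ :=
  fun D hD => by
    obtain ⟨x, hx, -⟩ := (hC.inter hδ hD).2.1 0 (isSuccLimit_of_aleph0_lt_cof hδ).bot_lt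
    exact ⟨x, hx⟩

theorem IsStationaryIn.isLimitPointOf (hδ : IsSuccLimit δ) (hA : IsStationaryIn A δ) :
    IsLimitPointOf A δ := by
  refine ⟨hδ.bot_lt, fun β hβ => ?_⟩
  obtain ⟨α, hαA, hα⟩ := hA _ (isClubIn_Ioo hδ hβ)
  exact ⟨α, hαA, hα⟩

end Clubs

section RegularCardinal

variable {κ : Cardinal.{0}}

theorem exists_lt_ord_forall_lt (hκ : κ.IsRegular) {o : Ordinal.{0}} (ho : o < κ.ord)
    {f : Ordinal.{0} → Ordinal.{0}} (hf : ∀ x < o, f x < κ.ord) :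
    ∃ B < κ.ord, ∀ x < o, f x < B := by
  refine ⟨⨆ x : Iio o, f x + 1, Ordinal.lift_iSup_add_one_lt_of_lt_cof ?_ fun x => hf x x.2,
    fun x hx => Ordinal.lt_iSup_add_one (fun x : Iio o => f x) ⟨x, hx⟩⟩
  rw [Cardinal.mk_Iio_ordinal, Cardinal.lift_lift, ← Ordinal.lift_cof, hκ.cof_ord, lift_lt, ← lt_ord]
  exact ho

theorem isClubIn_closurePoints (hκ : κ.IsRegular) (hκ₀ : ℵ₀ < κ) {f : Ordinal.{0} → Ordinal.{0}}
    (hf : ∀ α < κ.ord, f α < κ.ord) :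
    IsClubIn {δ | δ < κ.ord ∧ ∀ α < δ, f α < δ} κ.ord := by
  refine ⟨fun _ hδ => hδ.1, fun x hx => ?_, fun δ hδ hlim => ⟨hδ, fun α hα => ?_⟩⟩
  · choose! bound hbound_lt hbound using fun y (hy : y < κ.ord) =>
      exists_lt_ord_forall_lt hκ hy fun α hα => hf α (hα.trans hy)
    set g := fun y => max (succ y) (bound y)
    have hg : ∀ y < κ.ord, g y < κ.ord := fun y hy =>
      max_lt ((isSuccLimit_ord hκ₀.le).succ_lt hy) (hbound_lt y hy)
    have hcof : ℵ₀ < κ.ord.cof := by rwa [hκ.cof_ord]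
    have hiter : ∀ n, g^[n] x < κ.ord := fun n => by
      induction n with
      | zero => exact hx
      | succ n ih => rw [Function.iterate_succ_apply']; exact hg _ ih
    have hle : ∀ n, g (g^[n] x) ≤ Ordinal.nfp g x := fun n => by
      rw [← Function.iterate_succ_apply' g n x]
      exact Ordinal.iterate_le_nfp g x (n + 1)
    refine ⟨Ordinal.nfp g x, ⟨Ordinal.nfp_lt_ord hcof hg hx, fun α hα => ?_⟩,
      (lt_succ x).trans_le ((le_max_left _ _).trans (hle 0))⟩
    obtain ⟨n, hn⟩ := Ordinal.lt_nfp_iff.mp hα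
    exact (hbound _ (hiter n) α hn).trans_le ((le_max_right _ _).trans (hle n))
  · obtain ⟨γ, hγ, hαγ, hγδ⟩ := hlim.2 α hα
    exact (hγ.2 α hαγ).trans hγδ

theorem exists_surjOn_Iio_ord_prod (hκ : ℵ₀ ≤ κ) :
    ∃ π : Ordinal.{0} → Ordinal.{0} × Ordinal.{0}, SurjOn π (Iio κ.ord) (Iio κ.ord ×ˢ Iio κ.ord) := by
  have hcard : #(Iio κ.ord ×ˢ Iio κ.ord : Set (Ordinal.{0} × Ordinal.{0})) = #(Iio κ.ord) := by
    rw [mk_congr (Equiv.Set.prod _ _), mk_prod, Cardinal.lift_id, Cardinal.mk_Iio_ordinal, card_ord,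
      mul_eq_self (aleph0_le_lift.mpr hκ)]
  obtain ⟨e⟩ := Cardinal.eq.mp hcard
  refine ⟨fun β => if h : β ∈ Iio κ.ord then e.symm ⟨β, h⟩ else (0, 0), fun p hp => ?_⟩
  refine ⟨e ⟨p, hp⟩, (e ⟨p, hp⟩).2, ?_⟩
  dsimp only
  rw [dif_pos (e ⟨p, hp⟩).2, Subtype.coe_eta, Equiv.symm_apply_apply]

end RegularCardinal

def MatrixReflection (lam : Cardinal.{0}) (S : Set Ordinal.{0}) : Prop :=
  ∀ (j : Ordinal.{0} → Ordinal.{0}) (T : Ordinal.{0} → Ordinal.{0} → Set Ordinal.{0}),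
    (∀ α < lam.ord, (j α).card < lam) →
    (∀ α < lam.ord, ∀ i < j α, T α i ⊆ S ∧ IsStationaryIn (T α i) lam.ord) →
    ∃ γ < lam.ord, ℵ₀ < γ.cof ∧ ∀ α < γ, ∀ i < j α, IsStationaryIn (T α i ∩ Iio γ) γ

section Principles

variable {κ lam : Cardinal.{0}} {S : Set Ordinal.{0}}

theorem DSR.sDSR (h : DSR κ lam S) : sDSR κ lam S := fun j T hj hT => by
  obtain ⟨γ, hγ, hγcof, F, hF, hFT⟩ := h j T hj hT
  exact ⟨γ, hγ, hγcof, F, hF.1, hF.isStationaryIn hγcof, hFT⟩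

theorem sDSR.uDSR (h : sDSR κ lam S) : uDSR κ lam S := fun j T hj hT => by
  obtain ⟨γ, hγ, hγcof, F, hFγ, hF, hFT⟩ := h j T hj hT
  refine ⟨γ, hγ, hγcof, F, hFγ, fun β hβ => ?_, hFT⟩
  obtain ⟨α, hα, hβα, -⟩ := (hF.isLimitPointOf (isSuccLimit_of_aleph0_lt_cof hγcof)).2 β hβ
  exact ⟨α, hα, hβα⟩

theorem uDSR.OSR (h : uDSR lam lam S) : OSR lam S := fun T hT => by
  obtain ⟨γ, hγ, hγcof, F, -, hF, hFT⟩ := h (fun α => α) (fun _ i => T i)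
    (fun α hα => lt_ord.mp hα) (fun α hα i hi => hT i (hi.trans hα))
  refine ⟨γ, hγ, hγcof, fun ξ hξ => ?_⟩
  obtain ⟨α, hα, hξα⟩ := hF ξ hξ
  exact hFT α hα ξ hξα

theorem MatrixReflection.DSR (h : MatrixReflection lam S) : DSR lam lam S := fun j T hj hT => by
  obtain ⟨γ, hγ, hγcof, hγT⟩ := h j T hj hT
  have hγlim := isSuccLimit_of_aleph0_lt_cof hγcof
  exact ⟨γ, hγ, hγcof, Ioo 0 γ, isClubIn_Ioo hγlim hγlim.bot_lt, fun α hα => hγT α hα.2⟩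

theorem OSR.exists_mem_isClubIn (h : OSR lam S) (hcof : ℵ₀ < lam.ord.cof)
    {C : Set Ordinal.{0}} (hC : IsClubIn C lam.ord) {T : Ordinal.{0} → Set Ordinal.{0}}
    (hT : ∀ α < lam.ord, T α ⊆ S ∧ IsStationaryIn (T α) lam.ord) :
    ∃ δ ∈ C, ℵ₀ < δ.cof ∧ ∀ α < δ, IsStationaryIn (T α ∩ Iio δ) δ := by
  obtain ⟨δ, hδ, hδcof, hδT⟩ := h (fun α => T α ∩ C) fun α hα =>
    ⟨inter_subset_left.trans (hT α hα).1, (hT α hα).2.inter_isClubIn hcof hC⟩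
  have hδlim := isSuccLimit_of_aleph0_lt_cof hδcof
  -- any single member of the sequence reflecting at `δ` makes `δ` a limit point of `C`
  have hδC : δ ∈ C := hC.2.2 δ hδ <|
    ((hδT 0 hδlim.bot_lt).isLimitPointOf hδlim).mono fun _ hx => hx.1.2
  exact ⟨δ, hδC, hδcof, fun α hα => (hδT α hα).mono fun _ hx => ⟨hx.1.1, hx.2⟩⟩

theorem OSR.matrixReflection (hreg : lam.IsRegular) (hlam : ℵ₀ < lam)
    (hS : IsStationaryIn S lam.ord) (h : OSR lam S) : MatrixReflection lam S := by
  intro j T hj hT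
  have hcof : ℵ₀ < lam.ord.cof := by rwa [hreg.cof_ord]
  obtain ⟨π, hπ⟩ := exists_surjOn_Iio_ord_prod hlam.le
  have hindex : ∀ α < lam.ord, ∀ i < j α, ∃ β < lam.ord, π β = (α, i) := fun α hα i hi =>
    hπ ⟨hα, hi.trans (lt_ord.mpr (hj α hα))⟩
  choose! index hindex_lt hindex using hindex
  choose! bound hbound_lt hbound using fun α (hα : α < lam.ord) =>
    exists_lt_ord_forall_lt hreg (lt_ord.mpr (hj α hα)) (hindex_lt α hα)
  -- the enumeration `π` lists the matrix entries, padded with `S` where `π` leaves the matrix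
  let U (β : Ordinal.{0}) : Set Ordinal.{0} :=
    if (π β).1 < lam.ord ∧ (π β).2 < j (π β).1 then T (π β).1 (π β).2 else S
  have hU : ∀ β < lam.ord, U β ⊆ S ∧ IsStationaryIn (U β) lam.ord := fun β _ => by
    by_cases hβ : (π β).1 < lam.ord ∧ (π β).2 < j (π β).1
    · simpa only [U, if_pos hβ] using hT _ hβ.1 _ hβ.2
    · simpa only [U, if_neg hβ] using ⟨subset_rfl, hS⟩
  obtain ⟨δ, ⟨hδ, hδC⟩, hδcof, hδU⟩ :=
    h.exists_mem_isClubIn hcof (isClubIn_closurePoints hreg hlam hbound_lt) hU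
  refine ⟨δ, hδ, hδcof, fun α hα i hi => ?_⟩
  have hαlam := hα.trans hδ
  simpa only [U, hindex α hαlam i hi, if_pos (And.intro hαlam hi)] using
    hδU (index α i) ((hbound α hαlam i hi).trans (hδC α hα))

end Principles

theorem uDSR_DSR_OSR_equivalences_general (lam : Cardinal.{0})
    (hlam : Cardinal.aleph 2 ≤ lam) (hreg : lam.IsRegular)
    (S : Set Ordinal.{0})
    (hSstat : IsStationaryIn S lam.ord) :
    (uDSR lam lam S ↔ DSR lam lam S) ∧
    (DSR lam lam S ↔ OSR lam S) ∧
    (OSR lam S ↔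
      (∀ (j : Ordinal.{0} → Ordinal.{0}) (T : Ordinal.{0} → Ordinal.{0} → Set Ordinal.{0}),
        (∀ α < lam.ord, (j α).card < lam) →
        (∀ α < lam.ord, ∀ i < j α, T α i ⊆ S ∧ IsStationaryIn (T α i) lam.ord) →
        ∃ γ < lam.ord, Cardinal.aleph0 < γ.cof ∧
          ∀ α < γ, ∀ i < j α, IsStationaryIn (T α i ∩ Set.Iio γ) γ)) ∧
    (sDSR lam lam S ↔ DSR lam lam S) := by
  have hℵ₀ : ℵ₀ < lam := (aleph0_lt_aleph_one.trans (aleph_lt_aleph.mpr one_lt_two)).trans_le hlam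
  have hOM : OSR lam S → MatrixReflection lam S := OSR.matrixReflection hreg hℵ₀ hSstat
  have hDO : DSR lam lam S → OSR lam S := fun h => h.sDSR.uDSR.OSR
  exact ⟨⟨fun h => (hOM h.OSR).DSR, fun h => h.sDSR.uDSR⟩, ⟨hDO, fun h => (hOM h).DSR⟩,
    ⟨hOM, fun h => hDO (MatrixReflection.DSR h)⟩, ⟨fun h => (hOM h.uDSR.OSR).DSR, DSR.sDSR⟩⟩

/-- For a regular cardinal `λ ≥ ℵ₂` and stationary `S ⊆ λ`, the
principles `uDSR(<λ, S)`, `DSR(<λ, S)`, `OSR(S)`, and the diagonal matrix reflection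
property (4) are all equivalent; consequently `sDSR(<λ, S)` is equivalent to them too. -/
theorem uDSR_DSR_OSR_equivalences (lam : Cardinal.{0})
    (hlam : Cardinal.aleph 2 ≤ lam) (hreg : lam.IsRegular)
    (S : Set Ordinal.{0}) (hSsub : S ⊆ Set.Iio lam.ord)
    (hSstat : IsStationaryIn S lam.ord) :
    (uDSR lam lam S ↔ DSR lam lam S) ∧
    (DSR lam lam S ↔ OSR lam S) ∧
    (OSR lam S ↔
      (∀ (j : Ordinal.{0} → Ordinal.{0}) (T : Ordinal.{0} → Ordinal.{0} → Set Ordinal.{0}),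
        (∀ α < lam.ord, (j α).card < lam) →
        (∀ α < lam.ord, ∀ i < j α, T α i ⊆ S ∧ IsStationaryIn (T α i) lam.ord) →
        ∃ γ < lam.ord, Cardinal.aleph0 < γ.cof ∧
          ∀ α < γ, ∀ i < j α, IsStationaryIn (T α i ∩ Set.Iio γ) γ)) ∧
    (sDSR lam lam S ↔ DSR lam lam S) :=
  uDSR_DSR_OSR_equivalences_general lam hlam hreg S hSstat
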